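/- arXiv:2308.08393 — 4 statements merged into one kernel-verified Lean document; each statement's English description precedes it below -/
import Mathlib

section
/- Let X be an m×3 real matrix with homogeneous coordinates X̃ := (X | 𝟏) such that X̃ᵀX̃ is invertible, let L be any m×m real matrix, let R be a 3×3 real matrix with RᵀR = I and t ∈ ℝ³, and let X̃' := (XRᵀ + 𝟏tᵀ | 𝟏). Then the projected operators built from L agree: Π(X̃')ᵀ · L · Π(X̃') = Π(X̃)ᵀ · L · Π(X̃). -/
open Matrix

/-- The projection matrix `Π(A) := I − A (AᵀA)⁻¹ Aᵀ`. -/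
noncomputable def gramProj {m n : Type*} [Fintype m] [Fintype n] [DecidableEq m]
    [DecidableEq n] (A : Matrix m n ℝ) : Matrix m m ℝ :=
  1 - A * (Aᵀ * A)⁻¹ * Aᵀ

/-- Homogeneous coordinates: append an all-ones column to the coordinate matrix. -/
noncomputable def homog {m : ℕ} (X : Matrix (Fin m) (Fin 3) ℝ) :
    Matrix (Fin m) (Fin 3 ⊕ Fin 1) ℝ :=
  Matrix.fromCols X (Matrix.of fun _ _ => (1 : ℝ))

/-!
`Π(A)` is the orthogonal projection onto the complement of the column space of `A`, so it only
depends on that column space. A rigid motion `x ↦ R x + t` acts on homogeneous coordinates by right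
multiplication with the invertible block matrix `[[Rᵀ, 0], [tᵀ, 1]]`, which leaves the column space
of `X̃` unchanged.
-/

theorem gramProj_mul_of_isUnit {m n : Type*} [Fintype m] [Fintype n] [DecidableEq m]
    [DecidableEq n] (A : Matrix m n ℝ) {B : Matrix n n ℝ} (hB : IsUnit B) :
    gramProj (A * B) = gramProj A := by
  have hBdet : IsUnit B.det := (isUnit_iff_isUnit_det B).mp hB
  have hBTdet : IsUnit Bᵀ.det := by rwa [det_transpose]
  have hGram : ((A * B)ᵀ * (A * B))⁻¹ = B⁻¹ * (Aᵀ * A)⁻¹ * Bᵀ⁻¹ := by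
    rw [transpose_mul, Matrix.mul_assoc, ← Matrix.mul_assoc Aᵀ, Matrix.mul_inv_rev,
      Matrix.mul_inv_rev, Matrix.mul_assoc]
  have hCancel : A * B * (B⁻¹ * (Aᵀ * A)⁻¹ * Bᵀ⁻¹) * (Bᵀ * Aᵀ) = A * (Aᵀ * A)⁻¹ * Aᵀ := by
    calc A * B * (B⁻¹ * (Aᵀ * A)⁻¹ * Bᵀ⁻¹) * (Bᵀ * Aᵀ)
        = A * B * B⁻¹ * (Aᵀ * A)⁻¹ * (Bᵀ⁻¹ * (Bᵀ * Aᵀ)) := by simp only [Matrix.mul_assoc]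
      _ = A * (Aᵀ * A)⁻¹ * Aᵀ := by
        rw [mul_nonsing_inv_cancel_right _ _ hBdet, nonsing_inv_mul_cancel_left _ _ hBTdet]
  rw [gramProj, gramProj, hGram, transpose_mul, hCancel]

theorem homog_mul_add_vecMulVec {m : ℕ} (X : Matrix (Fin m) (Fin 3) ℝ)
    (M : Matrix (Fin 3) (Fin 3) ℝ) (t : Fin 3 → ℝ) :
    homog (X * M + vecMulVec (1 : Fin m → ℝ) t) =
      homog X * fromBlocks M 0 (replicateRow (Fin 1) t) 1 := by
  rw [homog, homog, fromCols_mul_fromBlocks, Matrix.mul_zero, zero_add, Matrix.mul_one,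
    vecMulVec_eq (Fin 1)]
  rfl

theorem stmt4_general {m : ℕ} (X : Matrix (Fin m) (Fin 3) ℝ)
    (L : Matrix (Fin m) (Fin m) ℝ)
    (R : Matrix (Fin 3) (Fin 3) ℝ) (hR : Rᵀ * R = 1) (t : Fin 3 → ℝ) :
    (gramProj (homog (X * Rᵀ + vecMulVec (1 : Fin m → ℝ) t)))ᵀ * L *
        gramProj (homog (X * Rᵀ + vecMulVec (1 : Fin m → ℝ) t)) =
      (gramProj (homog X))ᵀ * L * gramProj (homog X) := by
  have hMotion :
      IsUnit (fromBlocks Rᵀ 0 (replicateRow (Fin 1) t) (1 : Matrix (Fin 1) (Fin 1) ℝ)) :=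
    isUnit_fromBlocks_zero₁₂.mpr ⟨IsUnit.of_mul_eq_one R hR, isUnit_one⟩
  rw [homog_mul_add_vecMulVec, gramProj_mul_of_isUnit _ hMotion]

theorem stmt4 {m : ℕ} (X : Matrix (Fin m) (Fin 3) ℝ)
    (hX : IsUnit ((homog X)ᵀ * homog X))
    (L : Matrix (Fin m) (Fin m) ℝ)
    (R : Matrix (Fin 3) (Fin 3) ℝ) (hR : Rᵀ * R = 1) (t : Fin 3 → ℝ) :
    (gramProj (homog (X * Rᵀ + vecMulVec (1 : Fin m → ℝ) t)))ᵀ * L *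
        gramProj (homog (X * Rᵀ + vecMulVec (1 : Fin m → ℝ) t)) =
      (gramProj (homog X))ᵀ * L * gramProj (homog X) :=
  stmt4_general X L R hR t
end

section
/- Let X be an m×3 real matrix with homogeneous coordinates X̃ := (X | 𝟏) such that X̃ᵀX̃ is invertible, let L be any m×m real matrix, and let s be a nonzero real number with X̃' := (sX | 𝟏). Then the projected Laplace–Beltrami operators built from L agree: Π(X̃')ᵀ · L · Π(X̃') = Π(X̃)ᵀ · L · Π(X̃); i.e. the PLBO is invariant under global rescaling of the vertex coordinates. -/
/-! Scaling the coordinates by `s` multiplies `X̃` on the right by the invertible matrix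
`diag(s, s, s, 1)`, and `Π(A)` is unchanged when `A` is multiplied on the right by an invertible
matrix. -/

open Matrix

theorem gramProj_mul_of_isUnit_det {m n : Type*} [Fintype m] [Fintype n] [DecidableEq m]
    [DecidableEq n] (A : Matrix m n ℝ) {D : Matrix n n ℝ} (hD : IsUnit D.det) :
    gramProj (A * D) = gramProj A := by
  rw [gramProj, gramProj, transpose_mul, show Dᵀ * Aᵀ * (A * D) = Dᵀ * (Aᵀ * A) * D by
    simp only [Matrix.mul_assoc], Matrix.mul_inv_rev, Matrix.mul_inv_rev]
  simp only [Matrix.mul_assoc, mul_nonsing_inv_cancel_left _ _ hD,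
    nonsing_inv_mul_cancel_left _ _ (isUnit_det_transpose D hD)]

def homogScale (s : ℝ) : Matrix (Fin 3 ⊕ Fin 1) (Fin 3 ⊕ Fin 1) ℝ :=
  diagonal (Sum.elim (fun _ => s) 1)

theorem isUnit_det_homogScale {s : ℝ} (hs : s ≠ 0) : IsUnit (homogScale s).det := by
  rw [← isUnit_iff_isUnit_det, homogScale, isUnit_diagonal, Pi.isUnit_iff]
  rintro (j | j)
  exacts [hs.isUnit, isUnit_one]

theorem homog_smul {m : ℕ} (X : Matrix (Fin m) (Fin 3) ℝ) (s : ℝ) :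
    homog (s • X) = homog X * homogScale s := by
  ext i (j | j) <;> simp [homog, homogScale, mul_comm]

theorem stmt6_general {m : ℕ} (X : Matrix (Fin m) (Fin 3) ℝ)
    (L : Matrix (Fin m) (Fin m) ℝ) (s : ℝ) (hs : s ≠ 0) :
    (gramProj (homog (s • X)))ᵀ * L * gramProj (homog (s • X)) =
      (gramProj (homog X))ᵀ * L * gramProj (homog X) := by
  rw [homog_smul, gramProj_mul_of_isUnit_det _ (isUnit_det_homogScale hs)]

theorem stmt6 {m : ℕ} (X : Matrix (Fin m) (Fin 3) ℝ)
    (hX : IsUnit ((homog X)ᵀ * homog X))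
    (L : Matrix (Fin m) (Fin m) ℝ) (s : ℝ) (hs : s ≠ 0) :
    (gramProj (homog (s • X)))ᵀ * L * gramProj (homog (s • X)) =
      (gramProj (homog X))ᵀ * L * gramProj (homog X) :=
  stmt6_general X L s hs
end

section
/- Let Y be an N×3 real matrix with homogeneous coordinates Ỹ := (Y | 𝟏) such that ỸᵀỸ is invertible, let L be any N×N real matrix, and set Δ := Π(Ỹ)ᵀ L Π(Ỹ). Then for every N×3 real matrix Ŷ, every 3×3 real matrix R with RᵀR = I and every t ∈ ℝ³: ‖Δ·(ŶRᵀ + 𝟏tᵀ)‖_F = ‖Δ·Ŷ‖_F. -/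
/-!
`Π(Ỹ)` annihilates every column of `Ỹ`, in particular the all-ones column, so the
PLBO `Δ` kills the translation `𝟏tᵀ`. What remains is `(ΔŶ)Rᵀ`, and right multiplication
by `Rᵀ` preserves the Frobenius norm because `‖A‖_F² = tr(AAᵀ)` and `RᵀR = I`.
-/

open Matrix

/-- The Frobenius norm of a real matrix. -/
noncomputable def frobNorm {m n : ℕ} (A : Matrix (Fin m) (Fin n) ℝ) : ℝ :=
  Real.sqrt (∑ i, ∑ j, (A i j) ^ 2)

theorem gramProj_mul_mul_eq_zero {m n k : Type*} [Fintype m] [Fintype n] [DecidableEq m]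
    [DecidableEq n] (A : Matrix m n ℝ) (hA : IsUnit (Aᵀ * A)) (B : Matrix n k ℝ) :
    gramProj A * (A * B) = 0 := by
  have hdet : IsUnit (Aᵀ * A).det := (isUnit_iff_isUnit_det _).mp hA
  rw [gramProj, Matrix.sub_mul, Matrix.one_mul, Matrix.mul_assoc, Matrix.mul_assoc,
    ← Matrix.mul_assoc Aᵀ, ← Matrix.mul_assoc _ (Aᵀ * A), nonsing_inv_mul _ hdet, Matrix.one_mul,
    sub_self]

theorem vecMulVec_one_eq_homog_mul {m : ℕ} (X : Matrix (Fin m) (Fin 3) ℝ) (t : Fin 3 → ℝ) :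
    vecMulVec (1 : Fin m → ℝ) t =
      homog X * fromRows (0 : Matrix (Fin 3) (Fin 3) ℝ) (replicateRow (Fin 1) t) := by
  rw [homog, fromCols_mul_fromRows]
  ext i j
  simp [mul_apply, vecMulVec_apply]

theorem gramProj_homog_mul_vecMulVec_one {m : ℕ} (X : Matrix (Fin m) (Fin 3) ℝ)
    (hX : IsUnit ((homog X)ᵀ * homog X)) (t : Fin 3 → ℝ) :
    gramProj (homog X) * vecMulVec (1 : Fin m → ℝ) t = 0 := by
  rw [vecMulVec_one_eq_homog_mul X t, gramProj_mul_mul_eq_zero _ hX]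

theorem sum_sq_eq_trace_mul_transpose {m n : ℕ} (A : Matrix (Fin m) (Fin n) ℝ) :
    ∑ i, ∑ j, (A i j) ^ 2 = (A * Aᵀ).trace := by
  simp [trace, mul_apply, sq]

theorem frobNorm_mul_transpose_of_transpose_mul_self_eq_one {m n k : ℕ}
    (M : Matrix (Fin m) (Fin n) ℝ) {R : Matrix (Fin k) (Fin n) ℝ} (hR : Rᵀ * R = 1) :
    frobNorm (M * Rᵀ) = frobNorm M := by
  have hgram : M * Rᵀ * (M * Rᵀ)ᵀ = M * Mᵀ := by
    rw [transpose_mul, transpose_transpose, Matrix.mul_assoc, ← Matrix.mul_assoc Rᵀ, hR,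
      Matrix.one_mul]
  rw [frobNorm, frobNorm, sum_sq_eq_trace_mul_transpose, sum_sq_eq_trace_mul_transpose, hgram]

theorem stmt11 {N : ℕ} (Y : Matrix (Fin N) (Fin 3) ℝ)
    (hY : IsUnit ((homog Y)ᵀ * homog Y)) (L : Matrix (Fin N) (Fin N) ℝ) :
    ∀ (Yh : Matrix (Fin N) (Fin 3) ℝ) (R : Matrix (Fin 3) (Fin 3) ℝ),
      Rᵀ * R = 1 → ∀ t : Fin 3 → ℝ,
        frobNorm (((gramProj (homog Y))ᵀ * L * gramProj (homog Y)) *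
            (Yh * Rᵀ + vecMulVec (1 : Fin N → ℝ) t)) =
          frobNorm (((gramProj (homog Y))ᵀ * L * gramProj (homog Y)) * Yh) := by
  intro Yh R hR t
  have htranslation : ((gramProj (homog Y))ᵀ * L * gramProj (homog Y)) *
      (Yh * Rᵀ + vecMulVec (1 : Fin N → ℝ) t) =
      ((gramProj (homog Y))ᵀ * L * gramProj (homog Y)) * Yh * Rᵀ := by
    rw [Matrix.mul_add, Matrix.mul_assoc _ (gramProj (homog Y)) (vecMulVec 1 t),
      gramProj_homog_mul_vecMulVec_one Y hY, Matrix.mul_zero, add_zero]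
    simp only [Matrix.mul_assoc]
  rw [htranslation, frobNorm_mul_transpose_of_transpose_mul_self_eq_one _ hR]
end

section
/- (Lemma 2b, objective-value identity.) Let X ∈ ℝ^{M×3} and Y ∈ ℝ^{N×3} with homogeneous coordinates X̃ := (X|𝟏), Ỹ := (Y|𝟏) having invertible Gram matrices; let ι : Fin n → Fin M and κ : Fin n → Fin N be keypoint index maps with keypoint matrices X_I, Y_J; let L_X ∈ ℝ^{M×M}, L_Y ∈ ℝ^{N×N} be arbitrary, with PLBOs Δ_X := Π(X̃)ᵀL_XΠ(X̃), Δ_Y := Π(Ỹ)ᵀL_YΠ(Ỹ); let h_X, h_Y ∈ ℝⁿ, d_X, d_Y > 0 and λ_def, λ_ori ≥ 0. Let R ∈ ℝ^{3×3} with RᵀR = I, det R = 1, and t ∈ ℝ³, and form the transformed shape X'' := XRᵀ + 𝟏tᵀ with PLBO Δ_X'' := Π(X̃'')ᵀL_XΠ(X̃'') where X̃'' := (X''|𝟏). Then for every n×n matrix P with Pᵀ𝟏ₙ = 𝟏ₙ, every X̂ ∈ ℝ^{M×3} and every Ŷ ∈ ℝ^{N×3}: E(X'', Y, Δ_X'',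 Δ_Y, h_X, h_Y, d_X, d_Y; P, X̂, ŶRᵀ + 𝟏tᵀ) = E(X, Y, Δ_X, Δ_Y, h_X, h_Y, d_X, d_Y; P, X̂, Ŷ). -/
open Matrix

/-- The projected Laplace–Beltrami operator built from a stiffness matrix `L`:
`Δ_proj := Π(Z̃)ᵀ L Π(Z̃)`. -/
noncomputable def plbo {m : ℕ} (Z : Matrix (Fin m) (Fin 3) ℝ)
    (L : Matrix (Fin m) (Fin m) ℝ) : Matrix (Fin m) (Fin m) ℝ :=
  (gramProj (homog Z))ᵀ * L * gramProj (homog Z)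

/-- The Euclidean norm of a real vector. -/
noncomputable def vnorm {n : ℕ} (v : Fin n → ℝ) : ℝ :=
  Real.sqrt (∑ i, (v i) ^ 2)

/-- The sparse matching objective `E` of the paper. -/
noncomputable def objE {n M N : ℕ} (lamDef lamOri : ℝ)
    (ι : Fin n → Fin M) (κ : Fin n → Fin N)
    (X : Matrix (Fin M) (Fin 3) ℝ) (Y : Matrix (Fin N) (Fin 3) ℝ)
    (ΔX : Matrix (Fin M) (Fin M) ℝ) (ΔY : Matrix (Fin N) (Fin N) ℝ)
    (hX hY : Fin n → ℝ) (dX dY : ℝ)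
    (P : Matrix (Fin n) (Fin n) ℝ)
    (Xh : Matrix (Fin M) (Fin 3) ℝ) (Yh : Matrix (Fin N) (Fin 3) ℝ) : ℝ :=
  (1 / (n * dY)) * frobNorm (Xh.submatrix ι id - P * Y.submatrix κ id)
    + (1 / (n * dX)) * frobNorm (Yh.submatrix κ id - Pᵀ * X.submatrix ι id)
    + lamDef * ((1 / (M * dY)) * frobNorm (ΔX * Xh)
        + (1 / (N * dX)) * frobNorm (ΔY * Yh))
    + (lamOri / n) * vnorm (hX - P *ᵥ hY)

/-- `P` is a permutation matrix: entries in `{0,1}` and all row and column sums equal `1`. -/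
def IsPermMat {n : ℕ} (P : Matrix (Fin n) (Fin n) ℝ) : Prop :=
  (∀ i j, P i j = 0 ∨ P i j = 1) ∧
    P *ᵥ (1 : Fin n → ℝ) = 1 ∧ Pᵀ *ᵥ (1 : Fin n → ℝ) = 1

/-
A rigid motion `Z ↦ Z Rᵀ + 𝟏 tᵀ` acts on homogeneous coordinates by right multiplication with
the invertible block matrix `[[Rᵀ, 0], [tᵀ, 1]]`, so it does not change the column space of `X̃`,
hence neither `Π(X̃)` nor the PLBO `Δ_X`. On the side of `Y`, `Δ_Y` annihilates `𝟏` (because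
`𝟏 = Ỹ e₄` and `Π(Ỹ) Ỹ = 0`), so `Δ_Y (Ŷ Rᵀ + 𝟏 tᵀ) = Δ_Y Ŷ Rᵀ`; and since `Pᵀ 𝟏 = 𝟏`, the
translation cancels in `Ŷ_J − Pᵀ X_I`, leaving a factor `Rᵀ`. Right multiplication by the
orthogonal `Rᵀ` preserves Frobenius norms, and the remaining terms do not involve the motion.
-/

lemma frobNorm_eq_sqrt_trace {m n : ℕ} (A : Matrix (Fin m) (Fin n) ℝ) :
    frobNorm A = √(A * Aᵀ).trace := by
  simp only [frobNorm, trace, diag, mul_apply, transpose_apply, sq]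

lemma frobNorm_mul_of_mul_transpose_eq_one {m n : ℕ} (A : Matrix (Fin m) (Fin n) ℝ)
    {B : Matrix (Fin n) (Fin n) ℝ} (hB : B * Bᵀ = 1) : frobNorm (A * B) = frobNorm A := by
  rw [frobNorm_eq_sqrt_trace, frobNorm_eq_sqrt_trace, transpose_mul, Matrix.mul_assoc,
    ← Matrix.mul_assoc B, hB, Matrix.one_mul]

lemma submatrix_mul_add_vecMulVec_one {l m k k' R : Type*} [Fintype k] [CommSemiring R]
    (Z : Matrix m k R) (B : Matrix k k' R) (t : k' → R) (ι : l → m) :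
    (Z * B + vecMulVec 1 t).submatrix ι id = Z.submatrix ι id * B + vecMulVec 1 t := by
  ext i j
  simp [mul_apply]

section GramProj

variable {m ν : Type*} [Fintype m] [Fintype ν] [DecidableEq m] [DecidableEq ν]

lemma gramProj_mul_of_isUnit_det_s13 (A : Matrix m ν ℝ) {B : Matrix ν ν ℝ} (hB : IsUnit B.det) :
    gramProj (A * B) = gramProj A := by
  have hBt : IsUnit Bᵀ.det := by rwa [det_transpose]
  have hgram : (A * B)ᵀ * (A * B) = Bᵀ * (Aᵀ * A) * B := by
    simp only [transpose_mul, Matrix.mul_assoc]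
  rw [gramProj, gramProj, hgram, Matrix.mul_inv_rev, Matrix.mul_inv_rev, transpose_mul]
  simp only [Matrix.mul_assoc]
  rw [← Matrix.mul_assoc B, mul_nonsing_inv B hB, Matrix.one_mul, ← Matrix.mul_assoc Bᵀ⁻¹,
    nonsing_inv_mul Bᵀ hBt, Matrix.one_mul]

lemma gramProj_mul_self (A : Matrix m ν ℝ) (hA : IsUnit (Aᵀ * A)) : gramProj A * A = 0 := by
  rw [gramProj, Matrix.sub_mul, Matrix.one_mul, Matrix.mul_assoc, Matrix.mul_assoc,
    nonsing_inv_mul _ ((isUnit_iff_isUnit_det _).mp hA), Matrix.mul_one, sub_self]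

end GramProj

noncomputable def homogMotion (R : Matrix (Fin 3) (Fin 3) ℝ) (t : Fin 3 → ℝ) :
    Matrix (Fin 3 ⊕ Fin 1) (Fin 3 ⊕ Fin 1) ℝ :=
  fromBlocks Rᵀ 0 (of fun _ j => t j) 1

lemma det_homogMotion (R : Matrix (Fin 3) (Fin 3) ℝ) (t : Fin 3 → ℝ) :
    (homogMotion R t).det = R.det := by
  rw [homogMotion, det_fromBlocks_zero₁₂, det_transpose, det_one, mul_one]

lemma homog_mul_transpose_add_vecMulVec {m : ℕ} (Z : Matrix (Fin m) (Fin 3) ℝ)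
    (R : Matrix (Fin 3) (Fin 3) ℝ) (t : Fin 3 → ℝ) :
    homog (Z * Rᵀ + vecMulVec 1 t) = homog Z * homogMotion R t := by
  ext i (j | j)
  · simp [homog, homogMotion, mul_apply, Fintype.sum_sum_type]
  · simp [homog, homogMotion, mul_apply, Fintype.sum_sum_type, Fin.eq_zero j]

lemma plbo_mul_transpose_add_vecMulVec {m : ℕ} (Z : Matrix (Fin m) (Fin 3) ℝ)
    (L : Matrix (Fin m) (Fin m) ℝ) {R : Matrix (Fin 3) (Fin 3) ℝ} (hR : IsUnit R.det)
    (t : Fin 3 → ℝ) :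
    plbo (Z * Rᵀ + vecMulVec 1 t) L = plbo Z L := by
  rw [plbo, homog_mul_transpose_add_vecMulVec,
    gramProj_mul_of_isUnit_det_s13 _ (by rwa [det_homogMotion]), plbo]

lemma homog_mulVec_last {m : ℕ} (Z : Matrix (Fin m) (Fin 3) ℝ) :
    homog Z *ᵥ Sum.elim 0 1 = 1 := by
  ext i
  simp [homog, mulVec, dotProduct, Fintype.sum_sum_type]

lemma plbo_mulVec_one {m : ℕ} (Z : Matrix (Fin m) (Fin 3) ℝ) (L : Matrix (Fin m) (Fin m) ℝ)
    (hZ : IsUnit ((homog Z)ᵀ * homog Z)) : plbo Z L *ᵥ 1 = 0 := by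
  rw [← homog_mulVec_last Z, plbo, mulVec_mulVec, Matrix.mul_assoc, gramProj_mul_self _ hZ,
    Matrix.mul_zero, zero_mulVec]

theorem stmt13_general {n M N : ℕ}
    (X : Matrix (Fin M) (Fin 3) ℝ) (Y : Matrix (Fin N) (Fin 3) ℝ)
    (hgY : IsUnit ((homog Y)ᵀ * homog Y))
    (ι : Fin n → Fin M) (κ : Fin n → Fin N)
    (LX : Matrix (Fin M) (Fin M) ℝ) (LY : Matrix (Fin N) (Fin N) ℝ)
    (hX hY : Fin n → ℝ) (dX dY : ℝ)
    (lamDef lamOri : ℝ)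
    (R : Matrix (Fin 3) (Fin 3) ℝ) (hR : Rᵀ * R = 1)
    (t : Fin 3 → ℝ)
    (P : Matrix (Fin n) (Fin n) ℝ) (hP : Pᵀ *ᵥ (1 : Fin n → ℝ) = 1)
    (Xh : Matrix (Fin M) (Fin 3) ℝ) (Yh : Matrix (Fin N) (Fin 3) ℝ) :
    objE lamDef lamOri ι κ (X * Rᵀ + vecMulVec (1 : Fin M → ℝ) t) Y
        (plbo (X * Rᵀ + vecMulVec (1 : Fin M → ℝ) t) LX) (plbo Y LY)
        hX hY dX dY P Xh (Yh * Rᵀ + vecMulVec (1 : Fin N → ℝ) t) =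
      objE lamDef lamOri ι κ X Y (plbo X LX) (plbo Y LY) hX hY dX dY P Xh Yh := by
  have hRt : Rᵀ * Rᵀᵀ = 1 := by rwa [transpose_transpose]
  have hkeypoints : (Yh * Rᵀ + vecMulVec 1 t).submatrix κ id
      - Pᵀ * (X * Rᵀ + vecMulVec 1 t).submatrix ι id
      = (Yh.submatrix κ id - Pᵀ * X.submatrix ι id) * Rᵀ := by
    rw [submatrix_mul_add_vecMulVec_one, submatrix_mul_add_vecMulVec_one, Matrix.mul_add,
      mul_vecMulVec, hP, ← Matrix.mul_assoc, Matrix.sub_mul]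
    abel
  have hdeformation : plbo Y LY * (Yh * Rᵀ + vecMulVec 1 t) = plbo Y LY * Yh * Rᵀ := by
    rw [Matrix.mul_add, mul_vecMulVec, plbo_mulVec_one Y LY hgY, zero_vecMulVec, add_zero,
      Matrix.mul_assoc]
  rw [objE, objE, hkeypoints, hdeformation, frobNorm_mul_of_mul_transpose_eq_one _ hRt,
    frobNorm_mul_of_mul_transpose_eq_one _ hRt,
    plbo_mul_transpose_add_vecMulVec X LX (isUnit_det_of_left_inverse hR)]

theorem stmt13 {n M N : ℕ}
    (X : Matrix (Fin M) (Fin 3) ℝ) (Y : Matrix (Fin N) (Fin 3) ℝ)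
    (hgX : IsUnit ((homog X)ᵀ * homog X)) (hgY : IsUnit ((homog Y)ᵀ * homog Y))
    (ι : Fin n → Fin M) (κ : Fin n → Fin N)
    (LX : Matrix (Fin M) (Fin M) ℝ) (LY : Matrix (Fin N) (Fin N) ℝ)
    (hX hY : Fin n → ℝ) (dX dY : ℝ) (hdX : 0 < dX) (hdY : 0 < dY)
    (lamDef lamOri : ℝ) (hld : 0 ≤ lamDef) (hlo : 0 ≤ lamOri)
    (R : Matrix (Fin 3) (Fin 3) ℝ) (hR : Rᵀ * R = 1) (hdet : R.det = 1)
    (t : Fin 3 → ℝ)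
    (P : Matrix (Fin n) (Fin n) ℝ) (hP : Pᵀ *ᵥ (1 : Fin n → ℝ) = 1)
    (Xh : Matrix (Fin M) (Fin 3) ℝ) (Yh : Matrix (Fin N) (Fin 3) ℝ) :
    objE lamDef lamOri ι κ (X * Rᵀ + vecMulVec (1 : Fin M → ℝ) t) Y
        (plbo (X * Rᵀ + vecMulVec (1 : Fin M → ℝ) t) LX) (plbo Y LY)
        hX hY dX dY P Xh (Yh * Rᵀ + vecMulVec (1 : Fin N → ℝ) t) =
      objE lamDef lamOri ι κ X Y (plbo X LX) (plbo Y LY) hX hY dX dY P Xh Yh :=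
  stmt13_general X Y hgY ι κ LX LY hX hY dX dY lamDef lamOri R hR t P hP Xh Yh
end
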